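/- arXiv:2502.17133 — 3 statements merged into one kernel-verified Lean document; each statement's English description precedes it below -/
import Mathlib

section
/- Every weakly d-degenerate graph is (d+1)-choosable, i.e., ch(G) ≤ wd(G) + 1. -/
open scoped Classical

noncomputable section

/-- One round of the removal process for (weak) degeneracy. `Reduce G save S f` means that,
in the graph `G`, all vertices of the remaining set `S` can be removed by a sequence of legal
`Delete` operations (and, if `save = true`, also `DeleteSave` operations), starting from the
value function `f`.  `Delete(G,f,u)` removes `u` and decreases `f` by one on each neighbor of
`u`; it is legal if the resulting function is nonnegative (on the remaining vertices).
`DeleteSave(G,f,u,w)`, for `w` a neighbor of `u`, removes `u` and decreases `f` by one on each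
neighbor of `u` other than `w`; it is legal if moreover `f u > f w`. -/
inductive Reduce {V : Type*} [DecidableEq V] (G : SimpleGraph V) (save : Bool) :
    Finset V → (V → ℤ) → Prop
  | empty (f : V → ℤ) : Reduce G save ∅ f
  | delete {S : Finset V} {f : V → ℤ} (u : V) (hu : u ∈ S)
      (hleg : ∀ v ∈ S.erase u, 0 ≤ if G.Adj u v then f v - 1 else f v)
      (h : Reduce G save (S.erase u) (fun v => if G.Adj u v then f v - 1 else f v)) :
      Reduce G save S f
  | deleteSave {S : Finset V} {f : V → ℤ} (u w : V) (hsave : save = true)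
      (hu : u ∈ S) (hw : w ∈ S) (hadj : G.Adj u w) (hfw : f w < f u)
      (hleg : ∀ v ∈ S.erase u, 0 ≤ if G.Adj u v ∧ v ≠ w then f v - 1 else f v)
      (h : Reduce G save (S.erase u) (fun v => if G.Adj u v ∧ v ≠ w then f v - 1 else f v)) :
      Reduce G save S f

/-- `G` is weakly `f`-degenerate: all vertices can be removed by legal `Delete` and
`DeleteSave` operations. -/
def WeaklyFDegenerate {V : Type*} [Fintype V] [DecidableEq V] (G : SimpleGraph V)
    (f : V → ℤ) : Prop :=
  Reduce G true Finset.univ f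

/-- `G` is `f`-degenerate: all vertices can be removed by legal `Delete` operations only. -/
def FDegenerate {V : Type*} [Fintype V] [DecidableEq V] (G : SimpleGraph V)
    (f : V → ℤ) : Prop :=
  Reduce G false Finset.univ f

/-- The weak degeneracy `wd(G)`: the least `d` such that `G` is weakly `d`-degenerate. -/
def wdNum {V : Type*} [Fintype V] [DecidableEq V] (G : SimpleGraph V) : ℕ :=
  sInf {d : ℕ | WeaklyFDegenerate G (fun _ => (d : ℤ))}

/-- The degeneracy `d(G)`: the least `d` such that `G` is `d`-degenerate. -/
def degNum {V : Type*} [Fintype V] [DecidableEq V] (G : SimpleGraph V) : ℕ :=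
  sInf {d : ℕ | FDegenerate G (fun _ => (d : ℤ))}

lemma reduce_colorable {V : Type*} [DecidableEq V] (G : SimpleGraph V) {S : Finset V}
    {f : V → ℤ} (h : Reduce G true S f) :
    ∀ L : V → Finset ℕ, (∀ v ∈ S, 0 ≤ f v) → (∀ v ∈ S, f v + 1 ≤ (L v).card) →
    ∃ c : V → ℕ, (∀ v ∈ S, c v ∈ L v) ∧ ∀ u ∈ S, ∀ v ∈ S, G.Adj u v → c u ≠ c v := by
  induction h with
  | empty f => exact fun L _ _ => ⟨fun _ => 0, by simp, by simp⟩
  | @delete S f u hu hleg h ih =>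
    intro L h0 hL
    have hcard : 1 ≤ (L u).card := by
      have h1 := h0 u hu; have h2 := hL u hu
      exact_mod_cast (by linarith : (1:ℤ) ≤ (L u).card)
    obtain ⟨α, hα⟩ := Finset.card_pos.mp hcard
    set L' : V → Finset ℕ := fun v => if G.Adj u v then (L v).erase α else L v with hL'def
    have hLcard : ∀ v ∈ S.erase u, (if G.Adj u v then f v - 1 else f v) + 1 ≤ ((L' v).card : ℤ) := by
      intro v hv
      have hvS := Finset.mem_of_mem_erase hv
      have h2 := hL v hvS
      by_cases ha : G.Adj u v
      · simp only [hL'def, ha, if_true]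
        have h3 := Finset.pred_card_le_card_erase (s := L v) (a := α)
        omega
      · simpa [hL'def, ha] using h2
    obtain ⟨c, hc1, hc2⟩ := ih L' hleg hLcard
    refine ⟨fun v => if v = u then α else c v, ?_, ?_⟩
    · intro v hv
      by_cases hvu : v = u
      · simp [hvu, hα]
      · simp only [hvu, if_false]
        have := hc1 v (Finset.mem_erase.mpr ⟨hvu, hv⟩)
        by_cases ha : G.Adj u v
        · simp only [hL'def, ha, if_true] at this
          exact Finset.mem_of_mem_erase this
        · simpa [hL'def, ha] using this
    · intro a ha b hb hab
      by_cases hau : a = u <;> by_cases hbu : b = u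
      · exact absurd (hau ▸ hbu ▸ hab) (G.irrefl)
      · simp only [hau, hbu, if_true, if_false]
        have := hc1 b (Finset.mem_erase.mpr ⟨hbu, hb⟩)
        rw [hau] at hab
        simp only [hL'def, hab, if_true] at this
        exact (Finset.ne_of_mem_erase this).symm
      · simp only [hau, hbu, if_true, if_false]
        have := hc1 a (Finset.mem_erase.mpr ⟨hau, ha⟩)
        rw [hbu] at hab
        simp only [hL'def, hab.symm, if_true] at this
        exact Finset.ne_of_mem_erase this
      · simp only [hau, hbu, if_false]
        exact hc2 a (Finset.mem_erase.mpr ⟨hau, ha⟩) b (Finset.mem_erase.mpr ⟨hbu, hb⟩) hab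
  | @deleteSave S f u w hsave hu hw hadj hfw hleg h ih =>
    intro L h0 hL
    have hcard : 1 ≤ (L u).card := by
      have h1 := h0 u hu; have h2 := hL u hu
      exact_mod_cast (by linarith : (1:ℤ) ≤ (L u).card)
    have hmain : ∃ α ∈ L u, f w + 1 ≤ (((L w).erase α).card : ℤ) := by
      by_cases hex : (L u \ L w).Nonempty
      · obtain ⟨α, hα⟩ := hex
        rw [Finset.mem_sdiff] at hα
        refine ⟨α, hα.1, ?_⟩
        rw [Finset.erase_eq_of_notMem hα.2]
        exact hL w hw
      · obtain ⟨α, hα⟩ := Finset.card_pos.mp hcard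
        refine ⟨α, hα, ?_⟩
        have hsub : L u ⊆ L w := by
          rw [Finset.not_nonempty_iff_eq_empty, Finset.sdiff_eq_empty_iff_subset] at hex
          exact hex
        have h1 := hL u hu
        have h2 := Finset.card_le_card hsub
        have h3 := Finset.pred_card_le_card_erase (s := L w) (a := α)
        omega
    obtain ⟨α, hα, hkey⟩ := hmain
    set L' : V → Finset ℕ := fun v => if G.Adj u v then (L v).erase α else L v with hL'def
    have hLcard : ∀ v ∈ S.erase u,
        (if G.Adj u v ∧ v ≠ w then f v - 1 else f v) + 1 ≤ ((L' v).card : ℤ) := by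
      intro v hv
      have hvS := Finset.mem_of_mem_erase hv
      have h2 := hL v hvS
      by_cases ha : G.Adj u v
      · by_cases hvw : v = w
        · subst hvw
          simpa [hL'def, ha] using hkey
        · simp only [hL'def, ha, hvw, ne_eq, not_false_iff, and_true, if_true]
          have h3 := Finset.pred_card_le_card_erase (s := L v) (a := α)
          omega
      · have hna : ¬ (G.Adj u v ∧ v ≠ w) := fun hc => ha hc.1
        simpa [hL'def, ha, hna] using h2
    obtain ⟨c, hc1, hc2⟩ := ih L' hleg hLcard
    refine ⟨fun v => if v = u then α else c v, ?_, ?_⟩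
    · intro v hv
      by_cases hvu : v = u
      · simp [hvu, hα]
      · simp only [hvu, if_false]
        have := hc1 v (Finset.mem_erase.mpr ⟨hvu, hv⟩)
        by_cases ha : G.Adj u v
        · simp only [hL'def, ha, if_true] at this
          exact Finset.mem_of_mem_erase this
        · simpa [hL'def, ha] using this
    · intro a ha b hb hab
      by_cases hau : a = u <;> by_cases hbu : b = u
      · exact absurd (hau ▸ hbu ▸ hab) (G.irrefl)
      · simp only [hau, hbu, if_true, if_false]
        have := hc1 b (Finset.mem_erase.mpr ⟨hbu, hb⟩)
        rw [hau] at hab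
        simp only [hL'def, hab, if_true] at this
        exact (Finset.ne_of_mem_erase this).symm
      · simp only [hau, hbu, if_true, if_false]
        have := hc1 a (Finset.mem_erase.mpr ⟨hau, ha⟩)
        rw [hbu] at hab
        simp only [hL'def, hab.symm, if_true] at this
        exact Finset.ne_of_mem_erase this
      · simp only [hau, hbu, if_false]
        exact hc2 a (Finset.mem_erase.mpr ⟨hau, ha⟩) b (Finset.mem_erase.mpr ⟨hbu, hb⟩) hab

/-- Every weakly `d`-degenerate graph is `(d+1)`-choosable: for every list assignment
giving each vertex at least `d + 1` colors, there is a proper coloring from the lists.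
In particular `ch(G) ≤ wd(G) + 1`. -/
theorem stmt5 {V : Type*} [Fintype V] [DecidableEq V] (G : SimpleGraph V) (d : ℕ)
    (hG : WeaklyFDegenerate G (fun _ => (d : ℤ)))
    (L : V → Finset ℕ) (hL : ∀ v : V, d + 1 ≤ (L v).card) :
    ∃ c : V → ℕ, (∀ v : V, c v ∈ L v) ∧ ∀ u v : V, G.Adj u v → c u ≠ c v := by
  obtain ⟨c, hc1, hc2⟩ := reduce_colorable G hG L
    (fun v _ => by positivity)
    (fun v _ => by exact_mod_cast hL v)
  exact ⟨c, fun v => hc1 v (Finset.mem_univ v),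
    fun a b hab => hc2 a (Finset.mem_univ a) b (Finset.mem_univ b) hab⟩
end
end

section
/- Let G be a graph containing an induced subgraph Γ isomorphic to K₅ minus two adjacent edges (vertices v₁,…,v₅, all K₅-edges present except v₂v₄ and v₂v₅) in which all five vertices of Γ have degree at most 4 in G. If G − V(Γ) admits an orientation D′ with maximum out-degree at most 3 and diff(D′) ≠ 0, then G admits an orientation D with maximum out-degree at most 3 and diff(D) ≠ 0. -/
open scoped Classical

noncomputable section

/-- Out-degree of a vertex `v` in the digraph with arc set `A`. -/
def outDeg {V : Type*} (A : Finset (V × V)) (v : V) : ℕ :=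
  (A.filter (fun p => p.1 = v)).card

/-- In-degree of a vertex `v` in the digraph with arc set `A`. -/
def inDeg {V : Type*} (A : Finset (V × V)) (v : V) : ℕ :=
  (A.filter (fun p => p.2 = v)).card

/-- A digraph (given by its arc set) is Eulerian if every vertex has
equal in-degree and out-degree. -/
def IsEulerianArcs {V : Type*} (A : Finset (V × V)) : Prop :=
  ∀ v : V, inDeg A v = outDeg A v

/-- The Alon–Tarsi difference `diff(D) = |EE(D)| - |OE(D)|`. -/
def atDiff {V : Type*} (A : Finset (V × V)) : ℤ :=
  ∑ B ∈ A.powerset, if IsEulerianArcs B then (-1 : ℤ) ^ B.card else 0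

/-- `A` is an orientation of the graph `G`: each edge of `G` receives exactly one
direction, and every arc of `A` comes from an edge of `G`. -/
def IsOrientation {V : Type*} (G : SimpleGraph V) (A : Finset (V × V)) : Prop :=
  (∀ p ∈ A, G.Adj p.1 p.2) ∧ ∀ u v : V, G.Adj u v → ((u, v) ∈ A ↔ (v, u) ∉ A)


section Aux
variable {V : Type*}

lemma outDeg_union {A B : Finset (V × V)} (h : Disjoint A B) (v : V) :
    outDeg (A ∪ B) v = outDeg A v + outDeg B v := by
  unfold outDeg
  rw [Finset.filter_union,
    Finset.card_union_of_disjoint (h.mono (Finset.filter_subset _ _) (Finset.filter_subset _ _))]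

lemma inDeg_union {A B : Finset (V × V)} (h : Disjoint A B) (v : V) :
    inDeg (A ∪ B) v = inDeg A v + inDeg B v := by
  unfold inDeg
  rw [Finset.filter_union,
    Finset.card_union_of_disjoint (h.mono (Finset.filter_subset _ _) (Finset.filter_subset _ _))]

lemma outDeg_eq_zero {A : Finset (V × V)} {v : V} (h : ∀ p ∈ A, p.1 ≠ v) : outDeg A v = 0 := by
  unfold outDeg
  rw [Finset.card_eq_zero, Finset.filter_eq_empty_iff]
  exact h

lemma inDeg_eq_zero {A : Finset (V × V)} {v : V} (h : ∀ p ∈ A, p.2 ≠ v) : inDeg A v = 0 := by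
  unfold inDeg
  rw [Finset.card_eq_zero, Finset.filter_eq_empty_iff]
  exact h

lemma sum_outDeg (S : Finset V) (B : Finset (V × V)) :
    ∑ v ∈ S, outDeg B v = (B.filter (fun p => p.1 ∈ S)).card := by
  induction S using Finset.induction_on with
  | empty => simp [outDeg]
  | @insert a S ha ih =>

    rw [Finset.sum_insert ha, ih]
    unfold outDeg
    rw [← Finset.card_union_of_disjoint, ← Finset.filter_or]
    · apply congrArg
      apply Finset.filter_congr
      intro p _
      simp [Finset.mem_insert]
    · rw [Finset.disjoint_left]
      intro p hp hp'
      rw [Finset.mem_filter] at hp hp'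
      exact ha (hp.2 ▸ hp'.2)

lemma sum_inDeg (S : Finset V) (B : Finset (V × V)) :
    ∑ v ∈ S, inDeg B v = (B.filter (fun p => p.2 ∈ S)).card := by
  induction S using Finset.induction_on with
  | empty => simp [inDeg]
  | @insert a S ha ih =>

    rw [Finset.sum_insert ha, ih]
    unfold inDeg
    rw [← Finset.card_union_of_disjoint, ← Finset.filter_or]
    · apply congrArg
      apply Finset.filter_congr
      intro p _
      simp [Finset.mem_insert]
    · rw [Finset.disjoint_left]
      intro p hp hp'
      rw [Finset.mem_filter] at hp hp'
      exact ha (hp.2 ▸ hp'.2)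

end Aux


section Aux2
variable {V : Type*}

lemma isEulerian_union_iff (S : Finset V) {B₁ B₂ : Finset (V × V)}
    (h1 : ∀ p ∈ B₁, p.1 ∈ S ∧ p.2 ∈ S) (h2 : ∀ p ∈ B₂, p.1 ∉ S ∧ p.2 ∉ S) :
    IsEulerianArcs (B₁ ∪ B₂) ↔ IsEulerianArcs B₁ ∧ IsEulerianArcs B₂ := by
  have hdisj : Disjoint B₁ B₂ := by
    rw [Finset.disjoint_left]
    intro p hp1 hp2
    exact (h2 p hp2).1 (h1 p hp1).1
  have z1o : ∀ v : V, v ∉ S → outDeg B₁ v = 0 := fun v hv =>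
    outDeg_eq_zero (fun p hp e => hv (e ▸ (h1 p hp).1))
  have z1i : ∀ v : V, v ∉ S → inDeg B₁ v = 0 := fun v hv =>
    inDeg_eq_zero (fun p hp e => hv (e ▸ (h1 p hp).2))
  have z2o : ∀ v : V, v ∈ S → outDeg B₂ v = 0 := fun v hv =>
    outDeg_eq_zero (fun p hp e => (h2 p hp).1 (e ▸ hv))
  have z2i : ∀ v : V, v ∈ S → inDeg B₂ v = 0 := fun v hv =>
    inDeg_eq_zero (fun p hp e => (h2 p hp).2 (e ▸ hv))
  constructor
  · intro h
    constructor
    · intro v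
      by_cases hv : v ∈ S
      · have := h v
        rwa [inDeg_union hdisj, outDeg_union hdisj, z2i v hv, z2o v hv, add_zero, add_zero] at this
      · rw [z1i v hv, z1o v hv]
    · intro v
      by_cases hv : v ∈ S
      · rw [z2i v hv, z2o v hv]
      · have := h v
        rwa [inDeg_union hdisj, outDeg_union hdisj, z1i v hv, z1o v hv, zero_add, zero_add] at this
  · rintro ⟨e1, e2⟩ v
    rw [inDeg_union hdisj, outDeg_union hdisj, e1 v, e2 v]

lemma atDiff_union_cross (S : Finset V) (A C : Finset (V × V))
    (hA : ∀ p ∈ A, (p.1 ∈ S ↔ p.2 ∈ S)) (hC : ∀ p ∈ C, p.1 ∈ S ∧ p.2 ∉ S) :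
    atDiff (A ∪ C) = atDiff A := by
  unfold atDiff
  refine (Finset.sum_subset (Finset.powerset_mono.2 Finset.subset_union_left) ?_).symm
  intro B hB hnB
  rw [if_neg]
  intro hE
  apply hnB
  rw [Finset.mem_powerset] at hB ⊢
  have hHsubT : B.filter (fun p => p.2 ∈ S) ⊆ B.filter (fun p => p.1 ∈ S) := by
    intro p hp
    rw [Finset.mem_filter] at hp ⊢
    refine ⟨hp.1, ?_⟩
    rcases Finset.mem_union.1 (hB hp.1) with h | h
    · exact (hA p h).2 hp.2
    · exact absurd hp.2 (hC p h).2
  have hcard : (B.filter (fun p => p.1 ∈ S)).card ≤ (B.filter (fun p => p.2 ∈ S)).card := by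
    rw [← sum_outDeg S B, ← sum_inDeg S B]
    exact le_of_eq (Finset.sum_congr rfl (fun v _ => (hE v).symm))
  have hTH : B.filter (fun p => p.2 ∈ S) = B.filter (fun p => p.1 ∈ S) :=
    Finset.eq_of_subset_of_card_le hHsubT hcard
  intro p hp
  rcases Finset.mem_union.1 (hB hp) with h | h
  · exact h
  · exfalso
    have hpT : p ∈ B.filter (fun p => p.1 ∈ S) := Finset.mem_filter.2 ⟨hp, (hC p h).1⟩
    rw [← hTH] at hpT
    exact (hC p h).2 (Finset.mem_filter.1 hpT).2

lemma atDiff_union_mul (S : Finset V) (A₁ A₂ : Finset (V × V))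
    (h1 : ∀ p ∈ A₁, p.1 ∈ S ∧ p.2 ∈ S) (h2 : ∀ p ∈ A₂, p.1 ∉ S ∧ p.2 ∉ S) :
    atDiff (A₁ ∪ A₂) = atDiff A₁ * atDiff A₂ := by
  have hdisj : Disjoint A₁ A₂ := by
    rw [Finset.disjoint_left]
    intro p hp1 hp2
    exact (h2 p hp2).1 (h1 p hp1).1
  unfold atDiff
  rw [Finset.sum_mul_sum]
  rw [← Finset.sum_product']
  refine Finset.sum_bij' (i := fun B _ => (B ∩ A₁, B ∩ A₂)) (j := fun q _ => q.1 ∪ q.2)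
    ?_ ?_ ?_ ?_ ?_
  · intro B hB
    rw [Finset.mem_product]
    exact ⟨Finset.mem_powerset.2 Finset.inter_subset_right,
      Finset.mem_powerset.2 Finset.inter_subset_right⟩
  · intro q hq
    rw [Finset.mem_product, Finset.mem_powerset, Finset.mem_powerset] at hq
    exact Finset.mem_powerset.2 (Finset.union_subset_union hq.1 hq.2)
  · intro B hB
    rw [Finset.mem_powerset] at hB
    show (B ∩ A₁) ∪ (B ∩ A₂) = B
    rw [← Finset.inter_union_distrib_left, Finset.inter_eq_left.2 hB]
  · intro q hq
    rw [Finset.mem_product, Finset.mem_powerset, Finset.mem_powerset] at hq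
    have e1 : (q.1 ∪ q.2) ∩ A₁ = q.1 := by
      rw [Finset.union_inter_distrib_right, Finset.inter_eq_left.2 hq.1,
        Finset.disjoint_iff_inter_eq_empty.1 (hdisj.symm.mono_left hq.2), Finset.union_empty]
    have e2 : (q.1 ∪ q.2) ∩ A₂ = q.2 := by
      rw [Finset.union_inter_distrib_right, Finset.inter_eq_left.2 hq.2,
        Finset.disjoint_iff_inter_eq_empty.1 (hdisj.mono_left hq.1), Finset.empty_union]
    exact Prod.ext e1 e2
  · intro B hB
    rw [Finset.mem_powerset] at hB
    have hB1 : ∀ p ∈ B ∩ A₁, p.1 ∈ S ∧ p.2 ∈ S := fun p hp =>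
      h1 p (Finset.mem_of_mem_inter_right hp)
    have hB2 : ∀ p ∈ B ∩ A₂, p.1 ∉ S ∧ p.2 ∉ S := fun p hp =>
      h2 p (Finset.mem_of_mem_inter_right hp)
    have hbd : Disjoint (B ∩ A₁) (B ∩ A₂) :=
      hdisj.mono Finset.inter_subset_right Finset.inter_subset_right
    have hu : B = (B ∩ A₁) ∪ (B ∩ A₂) := by
      rw [← Finset.inter_union_distrib_left, Finset.inter_eq_left.2 hB]
    conv_lhs => rw [hu]
    rw [isEulerian_union_iff S hB1 hB2, Finset.card_union_of_disjoint hbd]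
    by_cases hh1 : IsEulerianArcs (B ∩ A₁) <;> by_cases hh2 : IsEulerianArcs (B ∩ A₂) <;>
      simp [hh1, hh2, pow_add]

end Aux2

section Aux3
variable {V W : Type*}

lemma outDeg_map (f : V ↪ W) (B : Finset (V × V)) (v : V) :
    outDeg (B.map (f.prodMap f)) (f v) = outDeg B v := by
  unfold outDeg
  rw [Finset.filter_map, Finset.card_map]
  apply congrArg
  apply Finset.filter_congr
  intro p _
  simp only [Function.comp_apply, Function.Embedding.coe_prodMap, Prod.map_apply]
  exact f.injective.eq_iff

lemma inDeg_map (f : V ↪ W) (B : Finset (V × V)) (v : V) :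
    inDeg (B.map (f.prodMap f)) (f v) = inDeg B v := by
  unfold inDeg
  rw [Finset.filter_map, Finset.card_map]
  apply congrArg
  apply Finset.filter_congr
  intro p _
  simp only [Function.comp_apply, Function.Embedding.coe_prodMap, Prod.map_apply]
  exact f.injective.eq_iff

lemma isEulerian_map (f : V ↪ W) (B : Finset (V × V)) :
    IsEulerianArcs (B.map (f.prodMap f)) ↔ IsEulerianArcs B := by
  constructor
  · intro h v
    have := h (f v)
    rwa [inDeg_map, outDeg_map] at this
  · intro h w
    by_cases hw : ∃ v, f v = w
    · obtain ⟨v, rfl⟩ := hw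
      rw [inDeg_map, outDeg_map]
      exact h v
    · push_neg at hw
      rw [inDeg_eq_zero, outDeg_eq_zero]
      · intro p hp
        obtain ⟨q, _, rfl⟩ := Finset.mem_map.1 hp
        exact hw q.1
      · intro p hp
        obtain ⟨q, _, rfl⟩ := Finset.mem_map.1 hp
        exact hw q.2

lemma atDiff_map (f : V ↪ W) (A : Finset (V × V)) :
    atDiff (A.map (f.prodMap f)) = atDiff A := by
  unfold atDiff
  set e := f.prodMap f
  refine (Finset.sum_bij' (i := fun D (_ : D ∈ A.powerset) => D.map e)
    (j := fun C _ => A.filter (fun p => e p ∈ C)) ?_ ?_ ?_ ?_ ?_).symm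
  · intro D hD
    rw [Finset.mem_powerset] at hD ⊢
    exact Finset.map_subset_map.2 hD
  · intro C _
    exact Finset.mem_powerset.2 (Finset.filter_subset _ _)
  · intro D hD
    rw [Finset.mem_powerset] at hD
    show A.filter (fun p => e p ∈ D.map e) = D
    ext p
    rw [Finset.mem_filter, Finset.mem_map']
    exact ⟨fun h => h.2, fun h => ⟨hD h, h⟩⟩
  · intro C hC
    rw [Finset.mem_powerset] at hC
    show (A.filter (fun p => e p ∈ C)).map e = C
    ext q
    simp only [Finset.mem_map, Finset.mem_filter]
    constructor
    · rintro ⟨p, ⟨_, hpC⟩, rfl⟩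
      exact hpC
    · intro hq
      obtain ⟨p, hpA, rfl⟩ := Finset.mem_map.1 (hC hq)
      exact ⟨p, ⟨hpA, hq⟩, rfl⟩
  · intro D _
    rw [Finset.card_map]
    exact if_congr (isEulerian_map f D).symm rfl rfl

end Aux3

def atDiffC (A : Finset (Fin 5 × Fin 5)) : ℤ :=
  ∑ B ∈ A.powerset,
    if (∀ v : Fin 5, (B.filter (fun p => p.2 = v)).card = (B.filter (fun p => p.1 = v)).card)
    then (-1 : ℤ) ^ B.card else 0

lemma filter_inst_eq {α : Type*} {p : α → Prop} (h1 h2 : DecidablePred p) (s : Finset α) :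
    @Finset.filter α p h1 s = @Finset.filter α p h2 s := by
  ext a
  exact (@Finset.mem_filter _ _ h1 _ _).trans (@Finset.mem_filter _ _ h2 _ _).symm

lemma atDiff_eq_atDiffC (A : Finset (Fin 5 × Fin 5)) : atDiff A = atDiffC A := by
  unfold atDiff atDiffC
  refine Finset.sum_congr rfl (fun B _ => ?_)
  have hc : IsEulerianArcs B ↔
      (∀ v : Fin 5,
        (B.filter (fun p => p.2 = v)).card = (B.filter (fun p => p.1 = v)).card) := by
    unfold IsEulerianArcs inDeg outDeg
    refine forall_congr' (fun v => ?_)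
    exact iff_of_eq (congrArg₂ (fun x y => x = y)
      (congrArg Finset.card (filter_inst_eq _ _ B))
      (congrArg Finset.card (filter_inst_eq _ _ B)))
  simp only [hc]

def P5 : Finset (Fin 5 × Fin 5) :=
  {(0, 1), (0, 2), (0, 3), (4, 0), (1, 2), (2, 3), (2, 4), (4, 3)}

set_option maxRecDepth 20000 in
lemma atDiffC_P5 : atDiffC P5 = 1 := by decide

lemma atDiff_P5 : atDiff P5 = 1 := by rw [atDiff_eq_atDiffC]; exact atDiffC_P5

/-- Let `G` contain an induced subgraph `Γ` isomorphic to `K₅` minus two adjacent edges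
(vertices `v₁, …, v₅`, all edges of `K₅` present except `v₂v₄` and `v₂v₅`), all five of
whose vertices have degree at most 4 in `G`.  If `G - V(Γ)` admits an orientation `D'`
with maximum out-degree at most 3 and `diff(D') ≠ 0`, then `G` admits an orientation `D`
with maximum out-degree at most 3 and `diff(D) ≠ 0`. -/
theorem stmt14 {V : Type*} [Fintype V] (G : SimpleGraph V)
    (v₁ v₂ v₃ v₄ v₅ : V)
    (hdist : v₁ ≠ v₂ ∧ v₁ ≠ v₃ ∧ v₁ ≠ v₄ ∧ v₁ ≠ v₅ ∧ v₂ ≠ v₃ ∧ v₂ ≠ v₄ ∧ v₂ ≠ v₅ ∧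
      v₃ ≠ v₄ ∧ v₃ ≠ v₅ ∧ v₄ ≠ v₅)
    (hadj : G.Adj v₁ v₂ ∧ G.Adj v₁ v₃ ∧ G.Adj v₁ v₄ ∧ G.Adj v₁ v₅ ∧
      G.Adj v₂ v₃ ∧ G.Adj v₃ v₄ ∧ G.Adj v₃ v₅ ∧ G.Adj v₄ v₅)
    (hnonadj : ¬ G.Adj v₂ v₄ ∧ ¬ G.Adj v₂ v₅)
    (hdeg : G.degree v₁ ≤ 4 ∧ G.degree v₂ ≤ 4 ∧ G.degree v₃ ≤ 4 ∧
      G.degree v₄ ≤ 4 ∧ G.degree v₅ ≤ 4)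
    (A' : Finset (V × V))
    -- `A'` is an orientation of `G - V(Γ)`, the graph obtained from `G` by deleting
    -- the vertices `v₁, …, v₅`:
    (hor' : IsOrientation
      (SimpleGraph.fromRel (fun u w => G.Adj u w ∧
        u ∉ ({v₁, v₂, v₃, v₄, v₅} : Set V) ∧ w ∉ ({v₁, v₂, v₃, v₄, v₅} : Set V))) A')
    (hout' : ∀ v : V, outDeg A' v ≤ 3)
    (hdiff' : atDiff A' ≠ 0) :
    ∃ A : Finset (V × V), IsOrientation G A ∧ (∀ v : V, outDeg A v ≤ 3) ∧
      atDiff A ≠ 0 := by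
  obtain ⟨h12, h13, h14, h15, h23, h24, h25, h34, h35, h45⟩ := hdist
  obtain ⟨a12, a13, a14, a15, a23, a34, a35, a45⟩ := hadj
  obtain ⟨n24, n25⟩ := hnonadj
  have h21 := h12.symm; have h31 := h13.symm; have h41 := h14.symm; have h51 := h15.symm
  have h32 := h23.symm; have h42 := h24.symm; have h52 := h25.symm
  have h43 := h34.symm; have h53 := h35.symm; have h54 := h45.symm
  set S : Finset V := {v₁, v₂, v₃, v₄, v₅} with hS
  have hmemS : ∀ x : V, x ∈ S ↔ (x = v₁ ∨ x = v₂ ∨ x = v₃ ∨ x = v₄ ∨ x = v₅) := by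
    intro x; simp [hS]
  have hSset : ∀ x : V, x ∈ ({v₁, v₂, v₃, v₄, v₅} : Set V) ↔ x ∈ S := by
    intro x; simp [hS]
  have hfinj : Function.Injective (![v₁, v₂, v₃, v₄, v₅]) := by
    intro a b hab
    fin_cases a <;> fin_cases b <;> simp_all
  set f : Fin 5 ↪ V := ⟨![v₁, v₂, v₃, v₄, v₅], hfinj⟩ with hf
  set AΓ : Finset (V × V) := P5.map (f.prodMap f) with hAΓdef
  have hAΓ : AΓ =
      {(v₁, v₂), (v₁, v₃), (v₁, v₄), (v₅, v₁), (v₂, v₃), (v₃, v₄), (v₃, v₅), (v₅, v₄)} := by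
    simp [hAΓdef, P5, Finset.map_insert, Finset.map_singleton,
      Function.Embedding.coe_prodMap, hf, Prod.map]
  set C : Finset (V × V) :=
    Finset.univ.filter (fun p : V × V => G.Adj p.1 p.2 ∧ p.1 ∈ S ∧ p.2 ∉ S) with hC
  have hCmem : ∀ p : V × V, p ∈ C ↔ (G.Adj p.1 p.2 ∧ p.1 ∈ S ∧ p.2 ∉ S) := by
    intro p; simp [hC]
  have hA'mem : ∀ p ∈ A', G.Adj p.1 p.2 ∧ p.1 ∉ S ∧ p.2 ∉ S := by
    intro p hp
    have h := hor'.1 p hp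
    rw [SimpleGraph.fromRel_adj] at h
    obtain ⟨hne, h | h⟩ := h
    · exact ⟨h.1, fun hx => h.2.1 ((hSset _).mpr hx), fun hx => h.2.2 ((hSset _).mpr hx)⟩
    · exact ⟨h.1.symm, fun hx => h.2.2 ((hSset _).mpr hx), fun hx => h.2.1 ((hSset _).mpr hx)⟩
  have hAΓS : ∀ p ∈ AΓ, p.1 ∈ S ∧ p.2 ∈ S := by
    intro p hp
    simp only [hAΓ, Finset.mem_insert, Finset.mem_singleton] at hp
    rcases hp with rfl | rfl | rfl | rfl | rfl | rfl | rfl | rfl <;>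
      exact ⟨by simp [hmemS], by simp [hmemS]⟩
  set A : Finset (V × V) := AΓ ∪ C ∪ A' with hA
  refine ⟨A, ⟨?_, ?_⟩, ?_, ?_⟩
  · -- arcs come from edges
    intro p hp
    rcases Finset.mem_union.1 hp with hp | hp
    · rcases Finset.mem_union.1 hp with hp | hp
      · simp only [hAΓ, Finset.mem_insert, Finset.mem_singleton] at hp
        rcases hp with rfl | rfl | rfl | rfl | rfl | rfl | rfl | rfl
        exacts [a12, a13, a14, a15.symm, a23, a34, a35, a45.symm]
      · exact ((hCmem p).1 hp).1
    · exact (hA'mem p hp).1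
  · -- orientation property
    intro u v huv
    by_cases hu : u ∈ S <;> by_cases hv : v ∈ S
    · -- both in S
      have hm : ∀ w z : V, w ∈ S → z ∈ S → ((w, z) ∈ A ↔ (w, z) ∈ AΓ) := by
        intro w z hw hz
        simp only [hA, Finset.mem_union]
        constructor
        · rintro ((h | h) | h)
          · exact h
          · exact absurd hz ((hCmem _).1 h).2.2
          · exact absurd hw (fun hw' => (hA'mem _ h).2.1 hw')
        · exact fun h => Or.inl (Or.inl h)
      rw [hm u v hu hv, hm v u hv hu, hAΓ]
      rcases (hmemS u).1 hu with rfl | rfl | rfl | rfl | rfl <;>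
        rcases (hmemS v).1 hv with rfl | rfl | rfl | rfl | rfl <;>
        first
          | exact absurd huv (G.loopless.irrefl _)
          | exact absurd huv n24
          | exact absurd huv n25
          | exact absurd huv.symm n24
          | exact absurd huv.symm n25
          | simp [Prod.ext_iff, h12, h13, h14, h15, h23, h24, h25, h34, h35, h45,
              h21, h31, h41, h51, h32, h42, h52, h43, h53, h54]
    · -- u ∈ S, v ∉ S
      constructor
      · intro _ hvu
        rcases Finset.mem_union.1 hvu with h | h
        · rcases Finset.mem_union.1 h with h | h
          · exact hv (hAΓS _ h).1
          · exact hv ((hCmem _).1 h).2.1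
        · exact (hA'mem _ h).2.2 hu
      · intro _
        exact Finset.mem_union.2 (Or.inl (Finset.mem_union.2 (Or.inr
          ((hCmem (u, v)).2 ⟨huv, hu, hv⟩))))
    · -- u ∉ S, v ∈ S
      constructor
      · intro h
        exfalso
        rcases Finset.mem_union.1 h with h | h
        · rcases Finset.mem_union.1 h with h | h
          · exact hu (hAΓS _ h).1
          · exact hu ((hCmem _).1 h).2.1
        · exact (hA'mem _ h).2.2 hv
      · intro h
        exfalso
        exact h (Finset.mem_union.2 (Or.inl (Finset.mem_union.2 (Or.inr
          ((hCmem (v, u)).2 ⟨huv.symm, hv, hu⟩)))))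
    · -- both outside S
      have hm : ∀ w z : V, w ∉ S → ((w, z) ∈ A ↔ (w, z) ∈ A') := by
        intro w z hw
        simp only [hA, Finset.mem_union]
        constructor
        · rintro ((h | h) | h)
          · exact absurd (hAΓS _ h).1 hw
          · exact absurd ((hCmem _).1 h).2.1 hw
          · exact h
        · exact fun h => Or.inr h
      rw [hm u v hu, hm v u hv]
      refine hor'.2 u v ?_
      rw [SimpleGraph.fromRel_adj]
      exact ⟨huv.ne, Or.inl ⟨huv, fun hx => hu ((hSset u).1 hx),
        fun hx => hv ((hSset v).1 hx)⟩⟩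
  · -- out-degree bound
    have hdAC : Disjoint AΓ C := by
      rw [Finset.disjoint_left]
      intro p hp hp'
      exact ((hCmem p).1 hp').2.2 (hAΓS p hp).2
    have hdACA' : Disjoint (AΓ ∪ C) A' := by
      rw [Finset.disjoint_left]
      intro p hp hp'
      rcases Finset.mem_union.1 hp with h | h
      · exact (hA'mem p hp').2.1 (hAΓS p h).1
      · exact (hA'mem p hp').2.1 ((hCmem p).1 h).2.1
    intro v
    rw [hA, outDeg_union hdACA', outDeg_union hdAC]
    by_cases hv : v ∈ S
    · have hA'0 : outDeg A' v = 0 :=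
        outDeg_eq_zero (fun p hp e => (hA'mem p hp).2.1 (e ▸ hv))
      have hCout : ∀ w : V, outDeg C w ≤ (G.neighborFinset w \ S).card := by
        intro w
        unfold outDeg
        apply Finset.card_le_card_of_injOn (fun p => p.2)
        · intro p hp
          rw [Finset.mem_coe, Finset.mem_filter] at hp
          obtain ⟨hpC, hpw⟩ := hp
          have h := (hCmem p).1 hpC
          rw [Finset.mem_coe, Finset.mem_sdiff, SimpleGraph.mem_neighborFinset]
          exact ⟨hpw ▸ h.1, h.2.2⟩
        · intro p hp q hq hpq
          rw [Finset.mem_coe, Finset.mem_filter] at hp hq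
          exact Prod.ext (hp.2.trans hq.2.symm) hpq
      have hext : ∀ (w : V) (T : Finset V), T ⊆ G.neighborFinset w ∩ S →
          G.degree w ≤ 4 → outDeg C w ≤ 4 - T.card := by
        intro w T hT hdegw
        have h1 := hCout w
        have h2 := Finset.card_inter_add_card_sdiff (G.neighborFinset w) S
        have h3 := Finset.card_le_card hT
        rw [SimpleGraph.card_neighborFinset_eq_degree] at h2
        omega
      have houtP : ∀ i : Fin 5,
          (P5.filter (fun p => p.1 = i)).card = ![3, 1, 2, 0, 2] i := by decide
      have houtΓ : ∀ i : Fin 5, outDeg AΓ (f i) = ![3, 1, 2, 0, 2] i := by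
        intro i
        rw [hAΓdef, outDeg_map]
        exact (congrArg Finset.card (filter_inst_eq _ _ P5)).trans (houtP i)
      have hf0 : f 0 = v₁ := rfl
      have hf1 : f 1 = v₂ := rfl
      have hf2 : f 2 = v₃ := rfl
      have hf3 : f 3 = v₄ := rfl
      have hf4 : f 4 = v₅ := rfl
      rcases (hmemS v).1 hv with rfl | rfl | rfl | rfl | rfl
      · have hg := houtΓ 0
        rw [hf0] at hg
        have hc : outDeg C v ≤ 4 - ({v₂, v₃, v₄, v₅} : Finset V).card := by
          refine hext v _ ?_ hdeg.1
          intro x hx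
          simp only [Finset.mem_insert, Finset.mem_singleton] at hx
          rw [Finset.mem_inter, SimpleGraph.mem_neighborFinset]
          rcases hx with rfl | rfl | rfl | rfl <;>
            exact ⟨by assumption, by simp [hmemS]⟩
        have hcard : ({v₂, v₃, v₄, v₅} : Finset V).card = 4 := by
          simp [Finset.card_insert_of_notMem, Finset.mem_insert, Finset.mem_singleton,
            h23, h24, h25, h34, h35, h45]
        rw [hcard] at hc
        norm_num at hg
        rw [hg]
        omega
      · have hg := houtΓ 1
        rw [hf1] at hg
        have hc : outDeg C v ≤ 4 - ({v₁, v₃} : Finset V).card := by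
          refine hext v _ ?_ hdeg.2.1
          intro x hx
          simp only [Finset.mem_insert, Finset.mem_singleton] at hx
          rw [Finset.mem_inter, SimpleGraph.mem_neighborFinset]
          rcases hx with rfl | rfl <;>
            exact ⟨by first | exact a12.symm | exact a23, by simp [hmemS]⟩
        have hcard : ({v₁, v₃} : Finset V).card = 2 := by
          simp [Finset.card_insert_of_notMem, Finset.mem_singleton, h13]
        rw [hcard] at hc
        norm_num at hg
        rw [hg]
        omega
      · have hg := houtΓ 2
        rw [hf2] at hg
        have hc : outDeg C v ≤ 4 - ({v₁, v₂, v₄, v₅} : Finset V).card := by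
          refine hext v _ ?_ hdeg.2.2.1
          intro x hx
          simp only [Finset.mem_insert, Finset.mem_singleton] at hx
          rw [Finset.mem_inter, SimpleGraph.mem_neighborFinset]
          rcases hx with rfl | rfl | rfl | rfl <;>
            exact ⟨by first | exact a13.symm | exact a23.symm | exact a34 | exact a35,
              by simp [hmemS]⟩
        have hcard : ({v₁, v₂, v₄, v₅} : Finset V).card = 4 := by
          simp [Finset.card_insert_of_notMem, Finset.mem_insert, Finset.mem_singleton,
            h12, h14, h15, h24, h25, h45]
        rw [hcard] at hc
        change _ = 2 at hg
        rw [hg]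
        omega
      · have hg := houtΓ 3
        rw [hf3] at hg
        have hc : outDeg C v ≤ 4 - ({v₁, v₃, v₅} : Finset V).card := by
          refine hext v _ ?_ hdeg.2.2.2.1
          intro x hx
          simp only [Finset.mem_insert, Finset.mem_singleton] at hx
          rw [Finset.mem_inter, SimpleGraph.mem_neighborFinset]
          rcases hx with rfl | rfl | rfl <;>
            exact ⟨by first | exact a14.symm | exact a34.symm | exact a45,
              by simp [hmemS]⟩
        have hcard : ({v₁, v₃, v₅} : Finset V).card = 3 := by
          simp [Finset.card_insert_of_notMem, Finset.mem_insert, Finset.mem_singleton,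
            h13, h15, h35]
        rw [hcard] at hc
        change _ = 0 at hg
        rw [hg]
        omega
      · have hg := houtΓ 4
        rw [hf4] at hg
        have hc : outDeg C v ≤ 4 - ({v₁, v₃, v₄} : Finset V).card := by
          refine hext v _ ?_ hdeg.2.2.2.2
          intro x hx
          simp only [Finset.mem_insert, Finset.mem_singleton] at hx
          rw [Finset.mem_inter, SimpleGraph.mem_neighborFinset]
          rcases hx with rfl | rfl | rfl <;>
            exact ⟨by first | exact a15.symm | exact a35.symm | exact a45.symm,
              by simp [hmemS]⟩
        have hcard : ({v₁, v₃, v₄} : Finset V).card = 3 := by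
          simp [Finset.card_insert_of_notMem, Finset.mem_insert, Finset.mem_singleton,
            h13, h14, h34]
        rw [hcard] at hc
        change _ = 2 at hg
        rw [hg]
        omega
    · have h1 : outDeg AΓ v = 0 := outDeg_eq_zero fun p hp e => hv (e ▸ (hAΓS p hp).1)
      have h2 : outDeg C v = 0 := outDeg_eq_zero fun p hp e => hv (e ▸ ((hCmem p).1 hp).2.1)
      rw [h1, h2]
      simpa using hout' v
  · -- nonzero diff
    have hAΓS' : ∀ p ∈ AΓ ∪ A', (p.1 ∈ S ↔ p.2 ∈ S) := by
      intro p hp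
      rcases Finset.mem_union.1 hp with h | h
      · have := hAΓS p h
        exact ⟨fun _ => this.2, fun _ => this.1⟩
      · have := hA'mem p h
        exact ⟨fun hx => absurd hx this.2.1, fun hx => absurd hx this.2.2⟩
    have step1 : atDiff A = atDiff (AΓ ∪ A') := by
      rw [hA, Finset.union_right_comm]
      exact atDiff_union_cross S (AΓ ∪ A') C hAΓS' (fun p hp => ((hCmem p).1 hp).2)
    have step2 : atDiff (AΓ ∪ A') = atDiff AΓ * atDiff A' :=
      atDiff_union_mul S AΓ A' hAΓS (fun p hp => ⟨(hA'mem p hp).2.1, (hA'mem p hp).2.2⟩)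
    have step3 : atDiff AΓ = 1 := by
      rw [hAΓdef, atDiff_map]
      exact atDiff_P5
    rw [step1, step2, step3, one_mul]
    exact hdiff'
end
end

section
/- If every connected graph with minimum degree at least 4 that has no subgraph isomorphic to K₅⁻ and belongs to a subgraph-closed class 𝒢 contains an induced subgraph isomorphic to the kite graph, K₅ minus two adjacent edges, or the house graph (as an induced subgraph), then every graph in 𝒢 with no K₅⁻ subgraph is weakly 3-degenerate. (Minimal-counterexample argument: a vertex-minimal non-weakly-3-degenerate graph is connected with minimum degree ≥ 4, and by the GDP-tree lemma cannot contain any of the three listed configurations as an induced subgraph whose vertices all have degree 4.) -/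
open scoped Classical

noncomputable section

/-- `G` contains `K₅⁻` (a `K₅` missing one edge) as a subgraph (not necessarily induced):
five distinct vertices with all ten pairs adjacent except possibly the pair `d, e`. -/
def HasK5MinusSubgraph {V : Type*} (G : SimpleGraph V) : Prop :=
  ∃ a b c d e : V,
    a ≠ b ∧ a ≠ c ∧ a ≠ d ∧ a ≠ e ∧ b ≠ c ∧ b ≠ d ∧ b ≠ e ∧ c ≠ d ∧ c ≠ e ∧ d ≠ e ∧
    G.Adj a b ∧ G.Adj a c ∧ G.Adj a d ∧ G.Adj a e ∧
    G.Adj b c ∧ G.Adj b d ∧ G.Adj b e ∧ G.Adj c d ∧ G.Adj c e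

/-- `G` contains an induced kite (4-cycle `abcd` plus chord `ac`) in which all four
vertices have degree 4 in `G`. -/
def HasInducedKite4 {V : Type*} [Fintype V] (G : SimpleGraph V) : Prop :=
  ∃ a b c d : V,
    a ≠ b ∧ a ≠ c ∧ a ≠ d ∧ b ≠ c ∧ b ≠ d ∧ c ≠ d ∧
    G.Adj a b ∧ G.Adj b c ∧ G.Adj c d ∧ G.Adj d a ∧ G.Adj a c ∧ ¬ G.Adj b d ∧
    G.degree a = 4 ∧ G.degree b = 4 ∧ G.degree c = 4 ∧ G.degree d = 4

/-- `G` contains an induced `K₅` minus two adjacent edges (on `v₁, …, v₅`, all edges of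
`K₅` present except `v₂v₄` and `v₂v₅`) in which all five vertices have degree 4 in `G`. -/
def HasInducedK5mm4 {V : Type*} [Fintype V] (G : SimpleGraph V) : Prop :=
  ∃ v₁ v₂ v₃ v₄ v₅ : V,
    v₁ ≠ v₂ ∧ v₁ ≠ v₃ ∧ v₁ ≠ v₄ ∧ v₁ ≠ v₅ ∧ v₂ ≠ v₃ ∧ v₂ ≠ v₄ ∧ v₂ ≠ v₅ ∧
    v₃ ≠ v₄ ∧ v₃ ≠ v₅ ∧ v₄ ≠ v₅ ∧
    G.Adj v₁ v₂ ∧ G.Adj v₁ v₃ ∧ G.Adj v₁ v₄ ∧ G.Adj v₁ v₅ ∧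
    G.Adj v₂ v₃ ∧ G.Adj v₃ v₄ ∧ G.Adj v₃ v₅ ∧ G.Adj v₄ v₅ ∧
    ¬ G.Adj v₂ v₄ ∧ ¬ G.Adj v₂ v₅ ∧
    G.degree v₁ = 4 ∧ G.degree v₂ = 4 ∧ G.degree v₃ = 4 ∧ G.degree v₄ = 4 ∧ G.degree v₅ = 4

/-- `G` contains an induced house (4-cycle `x₁x₂x₃x₄` plus a vertex `x₅` adjacent to `x₁`
and `x₄`) in which all five vertices have degree 4 in `G`. -/
def HasInducedHouse4 {V : Type*} [Fintype V] (G : SimpleGraph V) : Prop :=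
  ∃ x₁ x₂ x₃ x₄ x₅ : V,
    x₁ ≠ x₂ ∧ x₁ ≠ x₃ ∧ x₁ ≠ x₄ ∧ x₁ ≠ x₅ ∧ x₂ ≠ x₃ ∧ x₂ ≠ x₄ ∧ x₂ ≠ x₅ ∧
    x₃ ≠ x₄ ∧ x₃ ≠ x₅ ∧ x₄ ≠ x₅ ∧
    G.Adj x₁ x₂ ∧ G.Adj x₂ x₃ ∧ G.Adj x₃ x₄ ∧ G.Adj x₄ x₁ ∧ G.Adj x₁ x₅ ∧ G.Adj x₄ x₅ ∧
    ¬ G.Adj x₁ x₃ ∧ ¬ G.Adj x₂ x₄ ∧ ¬ G.Adj x₂ x₅ ∧ ¬ G.Adj x₃ x₅ ∧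
    G.degree x₁ = 4 ∧ G.degree x₂ = 4 ∧ G.degree x₃ = 4 ∧ G.degree x₄ = 4 ∧ G.degree x₅ = 4

/-- `G` contains the house graph as a subgraph (not necessarily induced) in which all five
vertices have degree 4 in `G`. -/
def HasHouseSubgraph4 {V : Type*} [Fintype V] (G : SimpleGraph V) : Prop :=
  ∃ x₁ x₂ x₃ x₄ x₅ : V,
    x₁ ≠ x₂ ∧ x₁ ≠ x₃ ∧ x₁ ≠ x₄ ∧ x₁ ≠ x₅ ∧ x₂ ≠ x₃ ∧ x₂ ≠ x₄ ∧ x₂ ≠ x₅ ∧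
    x₃ ≠ x₄ ∧ x₃ ≠ x₅ ∧ x₄ ≠ x₅ ∧
    G.Adj x₁ x₂ ∧ G.Adj x₂ x₃ ∧ G.Adj x₃ x₄ ∧ G.Adj x₄ x₁ ∧ G.Adj x₁ x₅ ∧ G.Adj x₄ x₅ ∧
    G.degree x₁ = 4 ∧ G.degree x₂ = 4 ∧ G.degree x₃ = 4 ∧ G.degree x₄ = 4 ∧ G.degree x₅ = 4

/-!
Let `G` be a smallest graph of `𝒢` without `K₅⁻` that is not weakly 3-degenerate. Its induced
subgraphs lie in `𝒢` and are smaller, so every proper vertex set of `G` can be removed starting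
from the constant 3. Removing `Cᶜ` first leaves each `v ∈ C` with `3 - |N(v) \ C|`, which settles
a vertex of degree at most 3 (take `C = {v}`) and a disconnected `G` (remove a component first:
the rest keeps the value 3). Otherwise the structural hypothesis yields a kite, a `K₅` minus two
adjacent edges or a house `C` all of whose vertices have degree 4, so that each `v ∈ C` is left
with `deg_C v - 1`. These graphs are 2-connected but neither cycles nor complete, i.e. not
GDP-trees, and an explicit sequence of `DeleteSave` operations removes `C`.
-/

open Finset

theorem SimpleGraph.card_neighborFinset_inter_erase {V : Type*} [Fintype V] [DecidableEq V]
    {G : SimpleGraph V} {S : Finset V} {u v : V} (hu : u ∈ S) :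
    (#(G.neighborFinset v ∩ S.erase u) : ℤ) =
      #(G.neighborFinset v ∩ S) - if G.Adj u v then 1 else 0 := by
  rw [inter_erase, card_erase_eq_ite]
  by_cases hadj : G.Adj u v
  · have : u ∈ G.neighborFinset v ∩ S := mem_inter.2 ⟨by simpa using hadj.symm, hu⟩
    simp [this, hadj, Nat.cast_sub (card_pos.2 ⟨u, this⟩)]
  · simp [hadj, G.adj_comm]

theorem HasK5MinusSubgraph.of_isContained {V W : Type*} {H : SimpleGraph V} {G : SimpleGraph W}
    (hHG : H.IsContained G) (h : HasK5MinusSubgraph H) : HasK5MinusSubgraph G := by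
  obtain ⟨φ⟩ := hHG
  obtain ⟨a, b, c, d, e, h₁, h₂, h₃, h₄, h₅, h₆, h₇, h₈, h₉, h₁₀, hab, hac, had, hae, hbc, hbd, hbe,
    hcd, hce⟩ := h
  have hφ := φ.injective
  exact ⟨φ a, φ b, φ c, φ d, φ e, hφ.ne h₁, hφ.ne h₂, hφ.ne h₃, hφ.ne h₄, hφ.ne h₅, hφ.ne h₆,
    hφ.ne h₇, hφ.ne h₈, hφ.ne h₉, hφ.ne h₁₀, φ.toHom.map_adj hab, φ.toHom.map_adj hac,
    φ.toHom.map_adj had, φ.toHom.map_adj hae, φ.toHom.map_adj hbc, φ.toHom.map_adj hbd,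
    φ.toHom.map_adj hbe, φ.toHom.map_adj hcd, φ.toHom.map_adj hce⟩

namespace Reduce

variable {V : Type*} [DecidableEq V] {G : SimpleGraph V} {save : Bool}

theorem congr {S : Finset V} {f g : V → ℤ} (h : Reduce G save S f) (hfg : ∀ v ∈ S, f v = g v) :
    Reduce G save S g := by
  induction h generalizing g with
  | empty => exact .empty g
  | delete u hu hleg _ ih =>
    refine .delete u hu (fun v hv => ?_) (ih fun v hv => ?_) <;>
      simp only [← hfg v (mem_of_mem_erase hv)]
    exact hleg v hv
  | deleteSave u w hsave hu hw hadj hfw hleg _ ih =>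
    refine .deleteSave u w hsave hu hw hadj (hfg w hw ▸ hfg u hu ▸ hfw) (fun v hv => ?_)
      (ih fun v hv => ?_) <;> simp only [← hfg v (mem_of_mem_erase hv)]
    exact hleg v hv

theorem singleton (u : V) (f : V → ℤ) : Reduce G save {u} f :=
  .delete u (mem_singleton_self u) (by simp) (by simpa using .empty _)

theorem map {V' : Type*} [DecidableEq V'] {G' : SimpleGraph V'} (ι : V ↪ V') {S : Finset V}
    {f : V → ℤ} {g : V' → ℤ} (h : Reduce (G'.comap ι) save S f)
    (hfg : ∀ a ∈ S, g (ι a) = f a) : Reduce G' save (S.map ι) g := by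
  induction h generalizing g with
  | empty => exact .empty g
  | delete u hu hleg _ ih =>
    refine .delete (ι u) (mem_map_of_mem ι hu) (fun v hv => ?_) ?_
    · rw [← map_erase] at hv
      obtain ⟨a, ha, rfl⟩ := mem_map.1 hv
      simpa [hfg a (mem_of_mem_erase ha)] using hleg a ha
    · rw [← map_erase]
      exact ih fun a ha => by simp [hfg a (mem_of_mem_erase ha)]
  | deleteSave u w hsave hu hw hadj hfw hleg _ ih =>
    refine .deleteSave (ι u) (ι w) hsave (mem_map_of_mem ι hu) (mem_map_of_mem ι hw) hadj
      (by rwa [hfg u hu, hfg w hw]) (fun v hv => ?_) ?_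
    · rw [← map_erase] at hv
      obtain ⟨a, ha, rfl⟩ := mem_map.1 hv
      simpa [hfg a (mem_of_mem_erase ha)] using hleg a ha
    · rw [← map_erase]
      exact ih fun a ha => by simp [hfg a (mem_of_mem_erase ha)]

variable [Fintype V]

theorem of_forall_card_le {S : Finset V} {f : V → ℤ}
    (hf : ∀ v ∈ S, #(G.neighborFinset v ∩ S) ≤ f v) : Reduce G save S f := by
  induction S using Finset.strongInduction generalizing f with
  | H S ih =>
  obtain rfl | ⟨u, hu⟩ := S.eq_empty_or_nonempty
  · exact .empty f
  have hle : ∀ v ∈ S.erase u,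
      #(G.neighborFinset v ∩ S.erase u) ≤ if G.Adj u v then f v - 1 else f v := fun v hv => by
    have := hf v (mem_of_mem_erase hv)
    rw [G.card_neighborFinset_inter_erase hu]
    split_ifs <;> omega
  exact .delete u hu (fun v hv => (Int.natCast_nonneg _).trans (hle v hv))
    (ih _ (erase_ssubset hu) hle)

theorem of_isIndepSet {S : Finset V} {f : V → ℤ} (hS : G.IsIndepSet (S : Set V))
    (hf : ∀ v ∈ S, 0 ≤ f v) : Reduce G save S f :=
  of_forall_card_le fun v hv => by
    rw [card_eq_zero.2 (eq_empty_of_forall_notMem fun w hw => ?_)]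
    · exact_mod_cast hf v hv
    · obtain ⟨hvw, hw⟩ := mem_inter.1 hw
      rw [SimpleGraph.mem_neighborFinset] at hvw
      exact hS hv hw hvw.ne hvw

theorem union {S T : Finset V} {f : V → ℤ} (hS : Reduce G save S f) (hST : Disjoint S T)
    (hnn : ∀ v ∈ T, 0 ≤ f v - #(G.neighborFinset v ∩ S))
    (hT : Reduce G save T fun v => f v - #(G.neighborFinset v ∩ S)) :
    Reduce G save (S ∪ T) f := by
  induction hS with
  | empty f => simpa using hT
  | @delete S f u hu hleg _ ih =>
    have huT : u ∉ T := disjoint_left.1 hST hu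
    have key : ∀ v ∈ T, (if G.Adj u v then f v - 1 else f v) - #(G.neighborFinset v ∩ S.erase u)
        = f v - #(G.neighborFinset v ∩ S) := fun v _ => by
      rw [G.card_neighborFinset_inter_erase hu]; split_ifs <;> ring
    refine .delete u (mem_union_left T hu) (fun v hv => ?_) ?_
    · obtain ⟨hvu, hv⟩ := mem_erase.1 hv
      rcases mem_union.1 hv with hvS | hvT
      · exact hleg v (mem_erase.2 ⟨hvu, hvS⟩)
      · have := hnn v hvT; have := key v hvT; omega
    · rw [erase_union_distrib, erase_eq_of_notMem huT]
      exact ih (disjoint_of_subset_left (erase_subset u S) hST)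
        (fun v hv => key v hv ▸ hnn v hv) (hT.congr fun v hv => (key v hv).symm)
  | @deleteSave S f u w hsave hu hw hadj hfw hleg _ ih =>
    have huT : u ∉ T := disjoint_left.1 hST hu
    have key : ∀ v ∈ T, (if G.Adj u v ∧ v ≠ w then f v - 1 else f v)
        - #(G.neighborFinset v ∩ S.erase u) = f v - #(G.neighborFinset v ∩ S) := fun v hv => by
      have hvw : v ≠ w := fun h => disjoint_left.1 hST (h ▸ hw) hv
      rw [G.card_neighborFinset_inter_erase hu]
      simp only [hvw, ne_eq, not_false_eq_true, and_true]
      split_ifs <;> ring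
    refine .deleteSave u w hsave (mem_union_left T hu) (mem_union_left T hw) hadj hfw
      (fun v hv => ?_) ?_
    · obtain ⟨hvu, hv⟩ := mem_erase.1 hv
      rcases mem_union.1 hv with hvS | hvT
      · exact hleg v (mem_erase.2 ⟨hvu, hvS⟩)
      · have := hnn v hvT; have := key v hvT; omega
    · rw [erase_union_distrib, erase_eq_of_notMem huT]
      exact ih (disjoint_of_subset_left (erase_subset u S) hST)
        (fun v hv => key v hv ▸ hnn v hv) (hT.congr fun v hv => (key v hv).symm)

end Reduce
section MinimalCounterexample

variable {W : Type*} [Fintype W] [DecidableEq W] {G : SimpleGraph W}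

theorem weaklyFDegenerate_of_degree_le_three
    (hproper : ∀ s : Finset W, s ≠ univ → Reduce G true s fun _ => 3) {v : W}
    (hv : G.degree v ≤ 3) : WeaklyFDegenerate G fun _ => 3 := by
  have h := (hproper _ (by simp)).union (disjoint_singleton_right.2 (notMem_erase v univ))
    (fun x hx => by
      rw [mem_singleton.1 hx]
      have := card_le_card (inter_subset_left (s₁ := G.neighborFinset v) (s₂ := univ.erase v))
      simp only [SimpleGraph.card_neighborFinset_eq_degree] at this
      omega)
    (Reduce.singleton v _)
  rwa [erase_union_eq v univ (mem_univ v)] at h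

theorem weaklyFDegenerate_of_not_connected
    (hproper : ∀ s : Finset W, s ≠ univ → Reduce G true s fun _ => 3) [Nonempty W]
    (hG : ¬G.Connected) : WeaklyFDegenerate G fun _ => 3 := by
  obtain ⟨u, w, huw⟩ : ∃ u w, ¬G.Reachable u w := by
    by_contra! h
    exact hG ⟨h⟩
  set S := univ.filter (G.Reachable u)
  have huS : u ∈ S := by simp [S]
  have hwS : w ∉ S := by simpa [S] using huw
  have hcross : ∀ v ∈ Sᶜ, G.neighborFinset v ∩ S = ∅ := fun v hv => by
    ext x
    simp only [S, mem_compl, mem_filter, mem_univ, true_and, mem_inter,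
      SimpleGraph.mem_neighborFinset, notMem_empty, iff_false, not_and] at hv ⊢
    exact fun hvx hux => hv (hux.trans hvx.symm.reachable)
  have h := (hproper S fun h => hwS (h ▸ mem_univ w)).union disjoint_compl_right
    (fun v hv => by simp [hcross v hv])
    ((hproper Sᶜ fun h => mem_compl.1 (h ▸ mem_univ u) huS).congr
      fun v hv => by simp [hcross v hv])
  rwa [union_compl] at h

theorem weaklyFDegenerate_of_reduce_of_degree_eq_four
    (hproper : ∀ s : Finset W, s ≠ univ → Reduce G true s fun _ => 3) {C : Finset W}
    (hC : C.Nonempty) (hdeg : ∀ v ∈ C, G.degree v = 4) {f : W → ℤ}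
    (hf : ∀ v ∈ C, f v = #(G.neighborFinset v ∩ C) - 1) (hf₀ : ∀ v ∈ C, 0 ≤ f v)
    (h : Reduce G true C f) : WeaklyFDegenerate G fun _ => 3 := by
  have hout : ∀ v ∈ C, 3 - (#(G.neighborFinset v ∩ Cᶜ) : ℤ) = f v := fun v hv => by
    have := card_sdiff_add_card_inter (G.neighborFinset v) C
    rw [sdiff_eq_inter_compl, SimpleGraph.card_neighborFinset_eq_degree, hdeg v hv] at this
    rw [hf v hv]; omega
  have h := (hproper Cᶜ fun h => hC.ne_empty ((compl_eq_univ_iff C).1 h)).union disjoint_compl_left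
    (fun v hv => hout v hv ▸ hf₀ v hv) (h.congr fun v hv => (hout v hv).symm)
  rwa [union_comm, union_compl] at h

theorem weaklyFDegenerate_of_hasInducedKite4
    (hproper : ∀ s : Finset W, s ≠ univ → Reduce G true s fun _ => 3)
    (h : HasInducedKite4 G) : WeaklyFDegenerate G fun _ => 3 := by
  obtain ⟨a, b, c, d, hab, hac, had, hbc, hbd, hcd, Gab, Gbc, Gcd, Gda, Gac, nbd,
    da, db, dc, dd⟩ := h
  have := Gab.symm; have := Gbc.symm; have := Gcd.symm; have := Gda.symm; have := Gac.symm
  have := hab.symm; have := hac.symm; have := had.symm; have := hbc.symm; have := hbd.symm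
  have := hcd.symm; have : ¬G.Adj d b := fun h => nbd h.symm
  -- `C` is listed in deletion order, so that every step erases the head of the list.
  refine weaklyFDegenerate_of_reduce_of_degree_eq_four hproper (C := {a, c, b, d})
    (f := fun v => if v = a ∨ v = c then 2 else 1) (by simp) (by simp [*]) ?_ ?_ ?_
  · simp [inter_insert_of_mem, inter_insert_of_notMem, card_insert_of_notMem, *]
  · simp [*]
  · refine .deleteSave a b rfl (by simp) (by simp) Gab (by simp [*]) (by simp [*]) ?_
    rw [erase_insert (by simp [*])]
    refine .deleteSave c d rfl (by simp) (by simp) Gcd (by simp [*]) (by simp [*]) ?_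
    rw [erase_insert (by simp [*])]
    exact .of_isIndepSet (by simp [*, Set.pairwise_pair]) (by simp [*])

theorem weaklyFDegenerate_of_hasInducedK5mm4
    (hproper : ∀ s : Finset W, s ≠ univ → Reduce G true s fun _ => 3)
    (h : HasInducedK5mm4 G) : WeaklyFDegenerate G fun _ => 3 := by
  obtain ⟨v₁, v₂, v₃, v₄, v₅, h₁₂, h₁₃, h₁₄, h₁₅, h₂₃, h₂₄, h₂₅, h₃₄, h₃₅, h₄₅,
    G₁₂, G₁₃, G₁₄, G₁₅, G₂₃, G₃₄, G₃₅, G₄₅, n₂₄, n₂₅, d₁, d₂, d₃, d₄, d₅⟩ := h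
  have := G₁₂.symm; have := G₁₃.symm; have := G₁₄.symm; have := G₁₅.symm; have := G₂₃.symm
  have := G₃₄.symm; have := G₃₅.symm; have := G₄₅.symm
  have : ¬G.Adj v₄ v₂ := fun h => n₂₄ h.symm
  have : ¬G.Adj v₅ v₂ := fun h => n₂₅ h.symm
  have := h₁₂.symm; have := h₁₃.symm; have := h₁₄.symm; have := h₁₅.symm; have := h₂₃.symm
  have := h₂₄.symm; have := h₂₅.symm; have := h₃₄.symm; have := h₃₅.symm; have := h₄₅.symm
  refine weaklyFDegenerate_of_reduce_of_degree_eq_four hproper (C := {v₁, v₃, v₄, v₂, v₅})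
    (f := fun v => if v = v₁ ∨ v = v₃ then 3 else if v = v₂ then 1 else 2) (by simp)
    (by simp [*]) ?_ ?_ ?_
  · simp [inter_insert_of_mem, inter_insert_of_notMem, card_insert_of_notMem, *]
  · simp [*]
  · refine .deleteSave v₁ v₂ rfl (by simp) (by simp) G₁₂ (by simp [*]) (by simp [*]) ?_
    rw [erase_insert (by simp [*])]
    refine .deleteSave v₃ v₄ rfl (by simp) (by simp) G₃₄ (by simp [*]) (by simp [*]) ?_
    rw [erase_insert (by simp [*])]
    refine .deleteSave v₄ v₅ rfl (by simp) (by simp) G₄₅ (by simp [*]) (by simp [*]) ?_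
    rw [erase_insert (by simp [*])]
    exact .of_isIndepSet (by simp [*, Set.pairwise_pair]) (by simp [*])

theorem weaklyFDegenerate_of_hasInducedHouse4
    (hproper : ∀ s : Finset W, s ≠ univ → Reduce G true s fun _ => 3)
    (h : HasInducedHouse4 G) : WeaklyFDegenerate G fun _ => 3 := by
  obtain ⟨x₁, x₂, x₃, x₄, x₅, h₁₂, h₁₃, h₁₄, h₁₅, h₂₃, h₂₄, h₂₅, h₃₄, h₃₅, h₄₅,
    G₁₂, G₂₃, G₃₄, G₄₁, G₁₅, G₄₅, n₁₃, n₂₄, n₂₅, n₃₅, d₁, d₂, d₃, d₄, d₅⟩ := h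
  have := G₁₂.symm; have := G₂₃.symm; have := G₃₄.symm; have := G₄₁.symm; have := G₁₅.symm
  have := G₄₅.symm
  have : ¬G.Adj x₃ x₁ := fun h => n₁₃ h.symm
  have : ¬G.Adj x₄ x₂ := fun h => n₂₄ h.symm
  have : ¬G.Adj x₅ x₂ := fun h => n₂₅ h.symm
  have : ¬G.Adj x₅ x₃ := fun h => n₃₅ h.symm
  have := h₁₂.symm; have := h₁₃.symm; have := h₁₄.symm; have := h₁₅.symm; have := h₂₃.symm
  have := h₂₄.symm; have := h₂₅.symm; have := h₃₄.symm; have := h₃₅.symm; have := h₄₅.symm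
  refine weaklyFDegenerate_of_reduce_of_degree_eq_four hproper (C := {x₁, x₄, x₂, x₃, x₅})
    (f := fun v => if v = x₁ ∨ v = x₄ then 2 else 1) (by simp) (by simp [*]) ?_ ?_ ?_
  · simp [inter_insert_of_mem, inter_insert_of_notMem, card_insert_of_notMem, *]
  · simp [*]
  · refine .deleteSave x₁ x₂ rfl (by simp) (by simp) G₁₂ (by simp [*]) (by simp [*]) ?_
    rw [erase_insert (by simp [*])]
    refine .deleteSave x₄ x₅ rfl (by simp) (by simp) G₄₅ (by simp [*]) (by simp [*]) ?_
    rw [erase_insert (by simp [*])]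
    refine .deleteSave x₂ x₃ rfl (by simp) (by simp) G₂₃ (by simp [*]) (by simp [*]) ?_
    rw [erase_insert (by simp [*])]
    exact .of_isIndepSet (by simp [*, Set.pairwise_pair]) (by simp [*])

end MinimalCounterexample

/-- Minimal-counterexample principle: suppose that every connected graph with minimum
degree at least 4, with no `K₅⁻` subgraph, belonging to a subgraph-closed class `𝒢`,
contains an induced kite, an induced `K₅` minus two adjacent edges, or an induced house,
all of whose vertices have degree 4.  Then every graph in `𝒢` with no `K₅⁻` subgraph is
weakly 3-degenerate. -/
theorem stmt15
    (𝒢 : ∀ (W : Type) [Fintype W] [DecidableEq W], SimpleGraph W → Prop)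
    -- `𝒢` is subgraph-closed:
    (hclosed : ∀ (W₁ W₂ : Type) [Fintype W₁] [DecidableEq W₁] [Fintype W₂] [DecidableEq W₂]
      (G : SimpleGraph W₂) (H : SimpleGraph W₁) (ι : W₁ ↪ W₂),
      (∀ a b : W₁, H.Adj a b → G.Adj (ι a) (ι b)) → 𝒢 W₂ G → 𝒢 W₁ H)
    -- the structural hypothesis:
    (hstruct : ∀ (W : Type) [Fintype W] [DecidableEq W] (G : SimpleGraph W),
      𝒢 W G → G.Connected → (∀ v : W, 4 ≤ G.degree v) → ¬ HasK5MinusSubgraph G →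
      HasInducedKite4 G ∨ HasInducedK5mm4 G ∨ HasInducedHouse4 G) :
    ∀ (W : Type) [Fintype W] [DecidableEq W] (G : SimpleGraph W),
      𝒢 W G → ¬ HasK5MinusSubgraph G → WeaklyFDegenerate G (fun _ => (3 : ℤ)) := by
  intro W _ _ G hG hK
  induction hn : Fintype.card W using Nat.strong_induction_on generalizing W with
  | _ n ih =>
  have hproper : ∀ s : Finset W, s ≠ univ → Reduce G true s fun _ => 3 := fun s hs => by
    let ι := Function.Embedding.subtype (· ∈ s)
    have hlt : Fintype.card s < n := by
      simpa [← hn] using card_lt_card (ssubset_univ_iff.2 hs)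
    have hK' : ¬HasK5MinusSubgraph (G.comap ι) := fun h =>
      hK (h.of_isContained (SimpleGraph.Embedding.comap ι G).isContained)
    have hs := ih _ hlt _ _ (hclosed _ _ G _ ι (fun _ _ h => h) hG) hK' rfl
    simpa [ι, attach_map_val] using hs.map ι (g := fun _ => 3) fun _ _ => rfl
  cases isEmpty_or_nonempty W
  · rw [WeaklyFDegenerate, univ_eq_empty]
    exact .empty _
  by_cases hdeg : ∃ v, G.degree v ≤ 3
  · obtain ⟨v, hv⟩ := hdeg
    exact weaklyFDegenerate_of_degree_le_three hproper hv
  by_cases hconn : G.Connected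
  · simp only [not_exists, not_le] at hdeg
    rcases hstruct W G hG hconn hdeg hK with h | h | h
    · exact weaklyFDegenerate_of_hasInducedKite4 hproper h
    · exact weaklyFDegenerate_of_hasInducedK5mm4 hproper h
    · exact weaklyFDegenerate_of_hasInducedHouse4 hproper h
  · exact weaklyFDegenerate_of_not_connected hproper hconn
end
end
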